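/- arXiv:2407.05001 — 4 statements merged into one kernel-verified Lean document; each statement's English description precedes it below -/
import Mathlib

section
/- Let f be a probability density on ℝ and φ_σ the N(0, σ²) density with σ > 0. Let f_σ = f * φ_σ be the convolution, so that f_σ'(y) = ∫ f(x) φ_σ'(y − x) dx. Then for every y ∈ ℝ, (f_σ'(y))² ≤ 2 (√(2π) e)⁻¹ σ⁻³ f_σ(y). -/
open MeasureTheory

/-- The Gaussian density with scale `σ`. -/
noncomputable def gaussKernel (σ x : ℝ) : ℝ :=
  (Real.sqrt (2 * Real.pi) * σ)⁻¹ * Real.exp (-x ^ 2 / (2 * σ ^ 2))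

/-- Derivative of the Gaussian kernel: `φ_σ'(x) = -(x/σ²) φ_σ(x)`. -/
noncomputable def gaussKernel' (σ x : ℝ) : ℝ := -(x / σ ^ 2) * gaussKernel σ x

lemma gaussKernel_nonneg (σ x : ℝ) (hσ : 0 < σ) : 0 ≤ gaussKernel σ x := by
  unfold gaussKernel
  have h2π : 0 < Real.sqrt (2 * Real.pi) := Real.sqrt_pos.mpr (by positivity)
  positivity

lemma gaussKernel_le (σ x : ℝ) (hσ : 0 < σ) :
    gaussKernel σ x ≤ (Real.sqrt (2 * Real.pi) * σ)⁻¹ := by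
  unfold gaussKernel
  have h2π : 0 < Real.sqrt (2 * Real.pi) := Real.sqrt_pos.mpr (by positivity)
  have h1 : Real.exp (-x ^ 2 / (2 * σ ^ 2)) ≤ 1 := by
    rw [Real.exp_le_one_iff]
    have : 0 ≤ x ^ 2 / (2 * σ ^ 2) := by positivity
    rw [neg_div]; linarith
  nlinarith [inv_pos.mpr (mul_pos h2π hσ)]

/-- `u * exp (-u) ≤ exp 1⁻¹` -/
lemma mul_exp_neg_le (u : ℝ) (hu : 0 ≤ u) : u * Real.exp (-u) ≤ (Real.exp 1)⁻¹ := by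
  have h1 : u ≤ Real.exp (u - 1) := by
    have := Real.add_one_le_exp (u - 1); linarith
  calc u * Real.exp (-u) ≤ Real.exp (u - 1) * Real.exp (-u) :=
        mul_le_mul_of_nonneg_right h1 (Real.exp_pos _).le
    _ = Real.exp (-1) := by rw [← Real.exp_add]; ring_nf
    _ = (Real.exp 1)⁻¹ := by rw [Real.exp_neg]

lemma sq_gaussKernel'_le (σ t : ℝ) (hσ : 0 < σ) :
    (gaussKernel' σ t) ^ 2
      ≤ 2 * (Real.sqrt (2 * Real.pi) * Real.exp 1)⁻¹ * (σ ^ 3)⁻¹ * gaussKernel σ t := by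
  have h2π : 0 < Real.sqrt (2 * Real.pi) := Real.sqrt_pos.mpr (by positivity)
  have hE : 0 < Real.exp (-t ^ 2 / (2 * σ ^ 2)) := Real.exp_pos _
  have key : t ^ 2 * Real.exp (-t ^ 2 / (2 * σ ^ 2)) ≤ 2 * σ ^ 2 * (Real.exp 1)⁻¹ := by
    have hu : (0:ℝ) ≤ t ^ 2 / (2 * σ ^ 2) := by positivity
    have h := mul_exp_neg_le (t ^ 2 / (2 * σ ^ 2)) hu
    have ht : t ^ 2 = 2 * σ ^ 2 * (t ^ 2 / (2 * σ ^ 2)) := by field_simp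
    have hexp : Real.exp (-t ^ 2 / (2 * σ ^ 2)) = Real.exp (-(t ^ 2 / (2 * σ ^ 2))) := by
      ring_nf
    rw [hexp]
    calc t ^ 2 * Real.exp (-(t ^ 2 / (2 * σ ^ 2)))
        = 2 * σ ^ 2 * ((t ^ 2 / (2 * σ ^ 2)) * Real.exp (-(t ^ 2 / (2 * σ ^ 2)))) := by
          field_simp
      _ ≤ 2 * σ ^ 2 * (Real.exp 1)⁻¹ :=
          mul_le_mul_of_nonneg_left h (by positivity)
  unfold gaussKernel' gaussKernel
  have hE1 : Real.exp (-t ^ 2 / (2 * σ ^ 2)) ≤ 1 := by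
    rw [Real.exp_le_one_iff]
    have : 0 ≤ t ^ 2 / (2 * σ ^ 2) := by positivity
    rw [neg_div]; linarith
  have expand : (-(t / σ ^ 2) * ((Real.sqrt (2 * Real.pi) * σ)⁻¹ *
      Real.exp (-t ^ 2 / (2 * σ ^ 2)))) ^ 2
      = (t ^ 2 * Real.exp (-t ^ 2 / (2 * σ ^ 2))) *
        (σ ^ 2)⁻¹ ^ 2 * ((Real.sqrt (2 * Real.pi) * σ)⁻¹) ^ 2 *
        Real.exp (-t ^ 2 / (2 * σ ^ 2)) := by
    field_simp
  rw [expand]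
  have hRHS : 2 * (Real.sqrt (2 * Real.pi) * Real.exp 1)⁻¹ * (σ ^ 3)⁻¹ *
      ((Real.sqrt (2 * Real.pi) * σ)⁻¹ * Real.exp (-t ^ 2 / (2 * σ ^ 2)))
      = (2 * σ ^ 2 * (Real.exp 1)⁻¹) * (σ ^ 2)⁻¹ ^ 2 * ((Real.sqrt (2 * Real.pi) * σ)⁻¹) ^ 2 *
        Real.exp (-t ^ 2 / (2 * σ ^ 2)) := by
    have hσ' : σ ≠ 0 := hσ.ne'
    have he : Real.exp 1 ≠ 0 := (Real.exp_pos 1).ne'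
    field_simp
  rw [hRHS]
  have hpos : 0 ≤ (σ ^ 2)⁻¹ ^ 2 * ((Real.sqrt (2 * Real.pi) * σ)⁻¹) ^ 2 *
      Real.exp (-t ^ 2 / (2 * σ ^ 2)) := by positivity
  calc t ^ 2 * Real.exp (-t ^ 2 / (2 * σ ^ 2)) * (σ ^ 2)⁻¹ ^ 2 *
        ((Real.sqrt (2 * Real.pi) * σ)⁻¹) ^ 2 * Real.exp (-t ^ 2 / (2 * σ ^ 2))
      = (t ^ 2 * Real.exp (-t ^ 2 / (2 * σ ^ 2))) *
        ((σ ^ 2)⁻¹ ^ 2 * ((Real.sqrt (2 * Real.pi) * σ)⁻¹) ^ 2 *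
          Real.exp (-t ^ 2 / (2 * σ ^ 2))) := by ring
    _ ≤ (2 * σ ^ 2 * (Real.exp 1)⁻¹) *
        ((σ ^ 2)⁻¹ ^ 2 * ((Real.sqrt (2 * Real.pi) * σ)⁻¹) ^ 2 *
          Real.exp (-t ^ 2 / (2 * σ ^ 2))) := mul_le_mul_of_nonneg_right key hpos
    _ = 2 * σ ^ 2 * (Real.exp 1)⁻¹ * (σ ^ 2)⁻¹ ^ 2 * ((Real.sqrt (2 * Real.pi) * σ)⁻¹) ^ 2 *
        Real.exp (-t ^ 2 / (2 * σ ^ 2)) := by ring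

lemma continuous_gaussKernel (σ : ℝ) (hσ : 0 < σ) : Continuous (gaussKernel σ) := by
  unfold gaussKernel
  fun_prop

lemma continuous_gaussKernel' (σ : ℝ) (hσ : 0 < σ) : Continuous (gaussKernel' σ) := by
  unfold gaussKernel' gaussKernel
  fun_prop

lemma abs_gaussKernel'_le (σ t : ℝ) (hσ : 0 < σ) :
    |gaussKernel' σ t| ≤ Real.sqrt (2 * (Real.sqrt (2 * Real.pi) * Real.exp 1)⁻¹ * (σ ^ 3)⁻¹ *
      (Real.sqrt (2 * Real.pi) * σ)⁻¹) := by
  have h2π : 0 < Real.sqrt (2 * Real.pi) := Real.sqrt_pos.mpr (by positivity)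
  have hC : (0:ℝ) ≤ 2 * (Real.sqrt (2 * Real.pi) * Real.exp 1)⁻¹ * (σ ^ 3)⁻¹ := by positivity
  have h1 : (gaussKernel' σ t) ^ 2 ≤ 2 * (Real.sqrt (2 * Real.pi) * Real.exp 1)⁻¹ * (σ ^ 3)⁻¹ *
      (Real.sqrt (2 * Real.pi) * σ)⁻¹ :=
    (sq_gaussKernel'_le σ t hσ).trans
      (mul_le_mul_of_nonneg_left (gaussKernel_le σ t hσ) hC)
  calc |gaussKernel' σ t| = Real.sqrt ((gaussKernel' σ t) ^ 2) := (Real.sqrt_sq_eq_abs _).symm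
    _ ≤ _ := Real.sqrt_le_sqrt h1

/-- For the Gaussian-smoothed density `f_σ = f * φ_σ`, with
`f_σ'(y) = ∫ f(x) φ_σ'(y-x) dx`, one has `(f_σ'(y))² ≤ 2(√(2π) e)⁻¹ σ⁻³ f_σ(y)`. -/
theorem stmt5 (f : ℝ → ℝ) (σ : ℝ) (hσ : 0 < σ)
    (hnn : ∀ x, 0 ≤ f x)
    (hint : Integrable f)
    (hprob : ∫ x, f x = 1) :
    ∀ y : ℝ,
      (∫ x, f x * gaussKernel' σ (y - x)) ^ 2
        ≤ 2 * (Real.sqrt (2 * Real.pi) * Real.exp 1)⁻¹ * (σ ^ 3)⁻¹ *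
            (∫ x, f x * gaussKernel σ (y - x)) := by
  intro y
  have h2π : 0 < Real.sqrt (2 * Real.pi) := Real.sqrt_pos.mpr (by positivity)
  set C : ℝ := 2 * (Real.sqrt (2 * Real.pi) * Real.exp 1)⁻¹ * (σ ^ 3)⁻¹ with hCdef
  have hC : 0 ≤ C := by positivity
  -- integrability facts
  have hmeas' : AEStronglyMeasurable (fun x => gaussKernel' σ (y - x)) volume :=
    ((continuous_gaussKernel' σ hσ).comp (continuous_const.sub continuous_id)).aestronglyMeasurable
  have hmeas : AEStronglyMeasurable (fun x => gaussKernel σ (y - x)) volume :=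
    ((continuous_gaussKernel σ hσ).comp (continuous_const.sub continuous_id)).aestronglyMeasurable
  have hint1 : Integrable (fun x => f x * gaussKernel' σ (y - x)) := by
    have := hint.bdd_mul (f := fun x => gaussKernel' σ (y - x)) hmeas'
      (Filter.Eventually.of_forall fun x => by
        rw [Real.norm_eq_abs]; exact abs_gaussKernel'_le σ (y - x) hσ)
    simpa [mul_comm] using this
  have hint2 : Integrable (fun x => f x * gaussKernel σ (y - x)) := by
    have := hint.bdd_mul (f := fun x => gaussKernel σ (y - x)) hmeas
      (Filter.Eventually.of_forall fun x => by
        rw [Real.norm_eq_abs, abs_of_nonneg (gaussKernel_nonneg σ _ hσ)]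
        exact gaussKernel_le σ _ hσ)
    simpa [mul_comm] using this
  have hint3 : Integrable (fun x => f x * gaussKernel' σ (y - x) ^ 2) := by
    have := hint.bdd_mul (f := fun x => gaussKernel' σ (y - x) ^ 2) (c := C * (Real.sqrt (2 * Real.pi) * σ)⁻¹) (hmeas'.pow 2)
      (Filter.Eventually.of_forall fun x => by
        rw [Real.norm_eq_abs, abs_of_nonneg (sq_nonneg _)]
        exact (sq_gaussKernel'_le σ (y - x) hσ).trans
          (mul_le_mul_of_nonneg_left (gaussKernel_le σ _ hσ) hC))
    simpa [mul_comm] using this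
  -- Cauchy–Schwarz step
  have hpq : Real.HolderConjugate 2 2 := ⟨by norm_num, by norm_num, by norm_num⟩
  have hsqrtmeas : AEStronglyMeasurable (fun x => Real.sqrt (f x)) volume :=
    Real.continuous_sqrt.comp_aestronglyMeasurable hint.aestronglyMeasurable
  have hmem1 : MemLp (fun x => Real.sqrt (f x)) (ENNReal.ofReal 2) volume := by
    rw [show ENNReal.ofReal 2 = 2 by norm_num]
    rw [memLp_two_iff_integrable_sq hsqrtmeas]
    have : (fun x => Real.sqrt (f x) ^ 2) = f := by
      funext x; exact Real.sq_sqrt (hnn x)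
    rw [this]; exact hint
  have hmem2 : MemLp (fun x => Real.sqrt (f x) * |gaussKernel' σ (y - x)|)
      (ENNReal.ofReal 2) volume := by
    rw [show ENNReal.ofReal 2 = 2 by norm_num]
    have habsmeas : AEStronglyMeasurable (fun x => |gaussKernel' σ (y - x)|) volume := by
      simpa [Real.norm_eq_abs] using hmeas'.norm
    rw [memLp_two_iff_integrable_sq
      (show AEStronglyMeasurable (fun x => Real.sqrt (f x) * |gaussKernel' σ (y - x)|) volume
        from hsqrtmeas.mul habsmeas)]
    have : (fun x => (Real.sqrt (f x) * |gaussKernel' σ (y - x)|) ^ 2)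
        = fun x => f x * gaussKernel' σ (y - x) ^ 2 := by
      funext x
      rw [mul_pow, Real.sq_sqrt (hnn x), sq_abs]
    rw [this]; exact hint3
  have rpow_two : ∀ a : ℝ, a ^ (2:ℝ) = a ^ 2 := fun a => by
    rw [show (2:ℝ) = ((2:ℕ):ℝ) by norm_num, Real.rpow_natCast]
  have holder := integral_mul_le_Lp_mul_Lq_of_nonneg hpq
    (Filter.Eventually.of_forall fun x => Real.sqrt_nonneg (f x))
    (Filter.Eventually.of_forall fun x =>
      mul_nonneg (Real.sqrt_nonneg _) (abs_nonneg _)) hmem1 hmem2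
  -- rewrite the three integrals in `holder`
  have e1 : (fun x => Real.sqrt (f x) * (Real.sqrt (f x) * |gaussKernel' σ (y - x)|))
      = fun x => f x * |gaussKernel' σ (y - x)| := by
    funext x
    rw [← mul_assoc, Real.mul_self_sqrt (hnn x)]
  have e2 : ∫ x, Real.sqrt (f x) ^ (2:ℝ) = 1 := by
    rw [show (fun x => Real.sqrt (f x) ^ (2:ℝ)) = f by
      funext x; rw [rpow_two, Real.sq_sqrt (hnn x)]]
    exact hprob
  have e3 : ∫ x, (Real.sqrt (f x) * |gaussKernel' σ (y - x)|) ^ (2:ℝ)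
      = ∫ x, f x * gaussKernel' σ (y - x) ^ 2 := by
    congr 1; funext x
    rw [rpow_two, mul_pow, Real.sq_sqrt (hnn x), sq_abs]
  rw [e1, e2, e3] at holder
  simp only [Real.one_rpow, one_mul] at holder
  -- holder : ∫ f |φ'| ≤ (∫ f φ'²) ^ (1/2 : ℝ)
  have hQnn : 0 ≤ ∫ x, f x * gaussKernel' σ (y - x) ^ 2 :=
    integral_nonneg fun x => mul_nonneg (hnn x) (sq_nonneg _)
  have hQle : ∫ x, f x * gaussKernel' σ (y - x) ^ 2
      ≤ C * ∫ x, f x * gaussKernel σ (y - x) := by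
    rw [← integral_const_mul]
    refine integral_mono hint3 (hint2.const_mul C) fun x => ?_
    calc f x * gaussKernel' σ (y - x) ^ 2
        ≤ f x * (C * gaussKernel σ (y - x)) :=
          mul_le_mul_of_nonneg_left (sq_gaussKernel'_le σ (y - x) hσ) (hnn x)
      _ = C * (f x * gaussKernel σ (y - x)) := by ring
  have habs : |∫ x, f x * gaussKernel' σ (y - x)| ≤ ∫ x, f x * |gaussKernel' σ (y - x)| := by
    calc |∫ x, f x * gaussKernel' σ (y - x)| ≤ ∫ x, |f x| * |gaussKernel' σ (y - x)| := by
          simpa [Real.norm_eq_abs, abs_mul] using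
            norm_integral_le_integral_norm (μ := volume)
              (f := fun x => f x * gaussKernel' σ (y - x))
      _ = ∫ x, f x * |gaussKernel' σ (y - x)| := by
          congr 1; funext x; rw [abs_of_nonneg (hnn x)]
  have hR : ((∫ x, f x * gaussKernel' σ (y - x) ^ 2) ^ (1/2 : ℝ)) ^ 2
      = ∫ x, f x * gaussKernel' σ (y - x) ^ 2 := by
    rw [← Real.rpow_natCast ((∫ x, f x * gaussKernel' σ (y - x) ^ 2) ^ (1/2 : ℝ)) 2,
      ← Real.rpow_mul hQnn]
    norm_num
  calc (∫ x, f x * gaussKernel' σ (y - x)) ^ 2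
      = |∫ x, f x * gaussKernel' σ (y - x)| ^ 2 := (sq_abs _).symm
    _ ≤ ((∫ x, f x * gaussKernel' σ (y - x) ^ 2) ^ (1/2 : ℝ)) ^ 2 := by
        apply pow_le_pow_left₀ (abs_nonneg _) (habs.trans holder)
    _ = ∫ x, f x * gaussKernel' σ (y - x) ^ 2 := hR
    _ ≤ C * ∫ x, f x * gaussKernel σ (y - x) := hQle
end

section
/- Let f be a probability density on ℝ and φ_σ the N(0, σ²) density with σ > 0. Let f_σ = f * φ_σ, so f_σ''(y) = ∫ f(x) φ_σ''(y − x) dx. Then for every y ∈ ℝ, (f_σ''(y))² ≤ (16 + e²)(√(2π) e²)⁻¹ σ⁻⁵ f_σ(y). -/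
open MeasureTheory

/-- Second derivative of the Gaussian kernel: `φ_σ''(x) = σ⁻²((x/σ)² - 1) φ_σ(x)`. -/
noncomputable def gaussKernel'' (σ x : ℝ) : ℝ :=
  (σ ^ 2)⁻¹ * ((x / σ) ^ 2 - 1) * gaussKernel σ x

lemma quartic_bound (t : ℝ) :
    (t ^ 2 - 1) ^ 2 * Real.exp (-t ^ 2 / 2) ≤ (16 + Real.exp 1 ^ 2) / Real.exp 1 ^ 2 := by
  have h1 : t ^ 2 / 4 ≤ Real.exp (t ^ 2 / 4 - 1) := by
    have := Real.add_one_le_exp (t ^ 2 / 4 - 1); linarith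
  have he : (0:ℝ) < Real.exp 1 ^ 2 := by positivity
  have h2 : Real.exp (t ^ 2 / 4 - 1) ^ 2 * Real.exp (-t ^ 2 / 2) = (Real.exp 1 ^ 2)⁻¹ := by
    have h2' : Real.exp 1 ^ 2 = Real.exp 2 := by rw [sq, ← Real.exp_add]; norm_num
    rw [h2', sq, ← Real.exp_add, ← Real.exp_add, ← Real.exp_neg]
    congr 1; ring
  have hE1 : Real.exp (-t ^ 2 / 2) ≤ 1 := Real.exp_le_one_iff.2 (by nlinarith [sq_nonneg t])
  have hEpos : 0 < Real.exp (-t ^ 2 / 2) := Real.exp_pos _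
  have h3 : t ^ 4 ≤ 16 * Real.exp (t ^ 2 / 4 - 1) ^ 2 := by
    nlinarith [sq_nonneg t, Real.exp_pos (t ^ 2 / 4 - 1)]
  have h4 : t ^ 4 * Real.exp (-t ^ 2 / 2) ≤ 16 * (Real.exp 1 ^ 2)⁻¹ := by
    calc t ^ 4 * Real.exp (-t ^ 2 / 2)
        ≤ 16 * Real.exp (t ^ 2 / 4 - 1) ^ 2 * Real.exp (-t ^ 2 / 2) :=
          mul_le_mul_of_nonneg_right h3 hEpos.le
      _ = 16 * (Real.exp (t ^ 2 / 4 - 1) ^ 2 * Real.exp (-t ^ 2 / 2)) := by ring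
      _ = 16 * (Real.exp 1 ^ 2)⁻¹ := by rw [h2]
  have h5 : (t ^ 2 - 1) ^ 2 * Real.exp (-t ^ 2 / 2)
      ≤ t ^ 4 * Real.exp (-t ^ 2 / 2) + Real.exp (-t ^ 2 / 2) := by nlinarith [sq_nonneg t]
  have h6 : (16 + Real.exp 1 ^ 2) / Real.exp 1 ^ 2 = 16 * (Real.exp 1 ^ 2)⁻¹ + 1 := by
    field_simp
  linarith

lemma kernel_sq_le (σ : ℝ) (hσ : 0 < σ) (x : ℝ) :
    (gaussKernel'' σ x) ^ 2
      ≤ (16 + Real.exp 1 ^ 2) * (Real.sqrt (2 * Real.pi) * Real.exp 1 ^ 2)⁻¹ * (σ ^ 5)⁻¹ *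
          gaussKernel σ x := by
  have hc : 0 < Real.sqrt (2 * Real.pi) := Real.sqrt_pos.2 (by positivity)
  set c := Real.sqrt (2 * Real.pi) with hcdef
  have hexp : -x ^ 2 / (2 * σ ^ 2) = -(x / σ) ^ 2 / 2 := by
    field_simp
  unfold gaussKernel'' gaussKernel
  rw [hexp]
  set t := x / σ with htdef
  set E := Real.exp (-t ^ 2 / 2) with hEdef
  have hEpos : 0 < E := Real.exp_pos _
  have hM := quartic_bound t
  have hpos : (0:ℝ) ≤ E * (c ^ 2 * σ ^ 6)⁻¹ := by positivity
  have he : (0:ℝ) < Real.exp 1 := Real.exp_pos 1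
  calc ((σ ^ 2)⁻¹ * (t ^ 2 - 1) * ((c * σ)⁻¹ * E)) ^ 2
      = ((t ^ 2 - 1) ^ 2 * E) * (E * (c ^ 2 * σ ^ 6)⁻¹) := by
        field_simp
    _ ≤ ((16 + Real.exp 1 ^ 2) / Real.exp 1 ^ 2) * (E * (c ^ 2 * σ ^ 6)⁻¹) :=
        mul_le_mul_of_nonneg_right hM hpos
    _ = (16 + Real.exp 1 ^ 2) * (c * Real.exp 1 ^ 2)⁻¹ * (σ ^ 5)⁻¹ * ((c * σ)⁻¹ * E) := by
        field_simp

lemma kernel_cont (σ : ℝ) (hσ : 0 < σ) (y : ℝ) :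
    Continuous (fun x => gaussKernel'' σ (y - x)) := by
  unfold gaussKernel'' gaussKernel
  fun_prop

lemma kernel_cont' (σ : ℝ) (hσ : 0 < σ) (y : ℝ) :
    Continuous (fun x => gaussKernel σ (y - x)) := by
  unfold gaussKernel
  fun_prop

/-- For the Gaussian-smoothed density `f_σ = f * φ_σ`, with
`f_σ''(y) = ∫ f(x) φ_σ''(y-x) dx`, one has
`(f_σ''(y))² ≤ (16 + e²)(√(2π) e²)⁻¹ σ⁻⁵ f_σ(y)`. -/
theorem stmt6 (f : ℝ → ℝ) (σ : ℝ) (hσ : 0 < σ)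
    (hnn : ∀ x, 0 ≤ f x)
    (hint : Integrable f)
    (hprob : ∫ x, f x = 1) :
    ∀ y : ℝ,
      (∫ x, f x * gaussKernel'' σ (y - x)) ^ 2
        ≤ (16 + (Real.exp 1) ^ 2) * (Real.sqrt (2 * Real.pi) * (Real.exp 1) ^ 2)⁻¹ *
            (σ ^ 5)⁻¹ * (∫ x, f x * gaussKernel σ (y - x)) := by
  intro y
  have hc : 0 < Real.sqrt (2 * Real.pi) := Real.sqrt_pos.2 (by positivity)
  have he : (0:ℝ) < Real.exp 1 := Real.exp_pos 1
  set K := (16 + (Real.exp 1) ^ 2) * (Real.sqrt (2 * Real.pi) * (Real.exp 1) ^ 2)⁻¹ *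
      (σ ^ 5)⁻¹ with hKdef
  have hK : 0 ≤ K := by positivity
  set g := fun x => gaussKernel'' σ (y - x) with hgdef
  set φ := fun x => gaussKernel σ (y - x) with hφdef
  have hφnn : ∀ x, 0 ≤ φ x := fun x => by
    unfold φ; unfold gaussKernel; positivity
  have hφle : ∀ x, φ x ≤ (Real.sqrt (2 * Real.pi) * σ)⁻¹ := fun x => by
    unfold φ; unfold gaussKernel
    have h1 : Real.exp (-(y - x) ^ 2 / (2 * σ ^ 2)) ≤ 1 :=
      Real.exp_le_one_iff.2
        (div_nonpos_of_nonpos_of_nonneg (neg_nonpos.2 (sq_nonneg _)) (by positivity))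
    calc (Real.sqrt (2 * Real.pi) * σ)⁻¹ * Real.exp (-(y - x) ^ 2 / (2 * σ ^ 2))
        ≤ (Real.sqrt (2 * Real.pi) * σ)⁻¹ * 1 :=
          mul_le_mul_of_nonneg_left h1 (by positivity)
      _ = (Real.sqrt (2 * Real.pi) * σ)⁻¹ := mul_one _
  have hkey : ∀ x, (g x) ^ 2 ≤ K * φ x := fun x => kernel_sq_le σ hσ (y - x)
  -- boundedness of g
  have hgbd : ∀ x, |g x| ≤ Real.sqrt (K * (Real.sqrt (2 * Real.pi) * σ)⁻¹) := by
    intro x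
    have h1 : (g x) ^ 2 ≤ K * (Real.sqrt (2 * Real.pi) * σ)⁻¹ :=
      (hkey x).trans (mul_le_mul_of_nonneg_left (hφle x) hK)
    have := Real.sqrt_le_sqrt h1
    rwa [Real.sqrt_sq_eq_abs] at this
  have hgcont := kernel_cont σ hσ y
  have hφcont := kernel_cont' σ hσ y
  -- integrability
  have hint_fg : Integrable (fun x => f x * g x) := by
    have := hint.bdd_mul hgcont.aestronglyMeasurable
      (c := Real.sqrt (K * (Real.sqrt (2 * Real.pi) * σ)⁻¹)) (ae_of_all _ fun x => by
        simpa [Real.norm_eq_abs] using hgbd x)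
    simpa [mul_comm] using this
  have hg2bd : ∀ x, ‖(g x) ^ 2‖ ≤ K * (Real.sqrt (2 * Real.pi) * σ)⁻¹ := by
    intro x
    rw [Real.norm_eq_abs, abs_of_nonneg (sq_nonneg _)]
    exact (hkey x).trans (mul_le_mul_of_nonneg_left (hφle x) hK)
  have hint_fg2 : Integrable (fun x => f x * (g x) ^ 2) := by
    have := hint.bdd_mul (hgcont.pow 2).aestronglyMeasurable
      (c := K * (Real.sqrt (2 * Real.pi) * σ)⁻¹) (ae_of_all _ hg2bd)
    simpa [mul_comm] using this
  have hint_fφ : Integrable (fun x => f x * φ x) := by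
    have := hint.bdd_mul hφcont.aestronglyMeasurable
      (c := (Real.sqrt (2 * Real.pi) * σ)⁻¹) (ae_of_all _ fun x => by
        rw [Real.norm_eq_abs, abs_of_nonneg (hφnn x)]; exact hφle x)
    simpa [mul_comm] using this
  set A := ∫ x, f x * g x with hAdef
  set B := ∫ x, f x * (g x) ^ 2 with hBdef
  -- Cauchy-Schwarz: A^2 ≤ B
  have hCS : A ^ 2 ≤ B := by
    have hvar : 0 ≤ ∫ x, f x * (g x - A) ^ 2 :=
      integral_nonneg fun x => mul_nonneg (hnn x) (sq_nonneg _)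
    have hexpand : ∫ x, f x * (g x - A) ^ 2 = B - 2 * A * A + A ^ 2 * 1 := by
      have : (fun x => f x * (g x - A) ^ 2)
          = fun x => f x * (g x) ^ 2 - 2 * A * (f x * g x) + A ^ 2 * f x := by
        funext x; ring
      have hsub : Integrable (fun x => f x * g x ^ 2 - 2 * A * (f x * g x)) :=
        hint_fg2.sub (hint_fg.const_mul (2 * A))
      rw [this, integral_add hsub (hint.const_mul (A ^ 2)),
        integral_sub hint_fg2 (hint_fg.const_mul (2 * A)), integral_const_mul,
        integral_const_mul, hprob]
    nlinarith [hvar, hexpand]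
  -- B ≤ K * ∫ f φ
  have hB : B ≤ K * ∫ x, f x * φ x := by
    rw [← integral_const_mul]
    refine integral_mono hint_fg2 (hint_fφ.const_mul K) fun x => ?_
    calc f x * (g x) ^ 2 ≤ f x * (K * φ x) :=
          mul_le_mul_of_nonneg_left (hkey x) (hnn x)
      _ = K * (f x * φ x) := by ring
  calc A ^ 2 ≤ B := hCS
    _ ≤ K * ∫ x, f x * φ x := hB
end

section
/- Let f be a differentiable probability density on ℝ with finite Fisher information I(f) = ∫ (f'(y))²/f(y) dy < ∞, and let φ_σ be the N(0, σ²) density. Then the convolution f_σ = f * φ_σ satisfies I(f_σ) = ∫ (f_σ'(y))²/f_σ(y) dy ≤ I(f). In other words, Fisher information does not increase under convolution with a Gaussian. -/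
open MeasureTheory

open scoped Convolution

/-- Cauchy–Schwarz for nonnegative functions on ℝ. -/
lemma cs_aux {a b : ℝ → ℝ} (ha : ∀ x, 0 ≤ a x) (hb : ∀ x, 0 ≤ b x)
    (hma : AEStronglyMeasurable a volume) (hmb : AEStronglyMeasurable b volume)
    (h2a : Integrable (fun x => a x ^ 2)) (h2b : Integrable (fun x => b x ^ 2)) :
    (∫ x, a x * b x) ^ 2 ≤ (∫ x, a x ^ 2) * (∫ x, b x ^ 2) := by
  have hpq : Real.HolderConjugate 2 2 := Real.holderConjugate_iff.mpr ⟨by norm_num, by norm_num⟩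
  have h2 : (ENNReal.ofReal (2:ℝ)) = 2 := by norm_num
  have hMa : MemLp a (ENNReal.ofReal (2:ℝ)) volume := by
    rw [h2]; exact (memLp_two_iff_integrable_sq hma).mpr h2a
  have hMb : MemLp b (ENNReal.ofReal (2:ℝ)) volume := by
    rw [h2]; exact (memLp_two_iff_integrable_sq hmb).mpr h2b
  have key := integral_mul_le_Lp_mul_Lq_of_nonneg hpq
    (Filter.Eventually.of_forall ha) (Filter.Eventually.of_forall hb) hMa hMb
  have hr : ∀ c : ℝ, c ^ (2:ℝ) = c ^ 2 := fun c => by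
    rw [show (2:ℝ) = ((2:ℕ):ℝ) by norm_num, Real.rpow_natCast]
  simp_rw [hr] at key
  have h1 : 0 ≤ ∫ x, a x ^ 2 := integral_nonneg fun x => sq_nonneg _
  have h2' : 0 ≤ ∫ x, b x ^ 2 := integral_nonneg fun x => sq_nonneg _
  have h0 : 0 ≤ ∫ x, a x * b x :=
    integral_nonneg fun x => mul_nonneg (ha x) (hb x)
  calc (∫ x, a x * b x) ^ 2
      ≤ ((∫ x, a x ^ 2) ^ (1/2:ℝ) * (∫ x, b x ^ 2) ^ (1/2:ℝ)) ^ 2 :=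
        pow_le_pow_left₀ h0 key 2
    _ = (∫ x, a x ^ 2) * (∫ x, b x ^ 2) := by
        rw [mul_pow, ← Real.rpow_natCast ((∫ x, a x ^ 2) ^ (1/2:ℝ)) 2,
          ← Real.rpow_natCast ((∫ x, b x ^ 2) ^ (1/2:ℝ)) 2,
          ← Real.rpow_mul h1, ← Real.rpow_mul h2']
        norm_num

/-- Fisher information does not increase under convolution with a Gaussian: with
`f_σ = f * φ_σ` and `f_σ'(y) = ∫ f'(y - x) φ_σ(x) dx`, one has `I(f_σ) ≤ I(f)`
(integrands taken to be 0 where the denominator vanishes). -/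
theorem stmt8 (f : ℝ → ℝ) (σ : ℝ) (hσ : 0 < σ)
    (hnn : ∀ x, 0 ≤ f x)
    (hint : Integrable f)
    (hprob : ∫ x, f x = 1)
    (hd : Differentiable ℝ f)
    (hfisher : Integrable (fun y => if f y = 0 then 0 else (deriv f y) ^ 2 / f y)) :
    (∫ y, (if (∫ x, f (y - x) * gaussKernel σ x) = 0 then 0 else
        (∫ x, deriv f (y - x) * gaussKernel σ x) ^ 2
          / (∫ x, f (y - x) * gaussKernel σ x)))
      ≤ ∫ y, (if f y = 0 then 0 else (deriv f y) ^ 2 / f y) := by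
  set φ : ℝ → ℝ := gaussKernel σ with hφ
  set g : ℝ → ℝ := fun y => if f y = 0 then 0 else (deriv f y) ^ 2 / f y with hg
  set L : ℝ →L[ℝ] ℝ →L[ℝ] ℝ := ContinuousLinearMap.mul ℝ ℝ with hL
  have hφc : Continuous φ := by
    unfold φ; unfold gaussKernel; fun_prop
  have hφnn : ∀ x, 0 ≤ φ x := fun x => by
    unfold φ; unfold gaussKernel
    positivity
  have hb : (0:ℝ) < 1 / (2 * σ ^ 2) := by positivity
  have hexp : ∀ x : ℝ, Real.exp (-x ^ 2 / (2 * σ ^ 2))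
      = Real.exp (-(1 / (2 * σ ^ 2)) * x ^ 2) := by
    intro x; congr 1; field_simp
  have hφint : Integrable φ := by
    unfold φ; unfold gaussKernel
    simp_rw [hexp]
    exact (integrable_exp_neg_mul_sq hb).const_mul _
  have hφ1 : ∫ x, φ x = 1 := by
    unfold φ; unfold gaussKernel
    simp_rw [hexp]
    rw [integral_const_mul, integral_gaussian]
    have h1 : Real.pi / (1 / (2 * σ ^ 2)) = 2 * Real.pi * σ ^ 2 := by
      field_simp
    have h2 : Real.sqrt (2 * Real.pi * σ ^ 2) = Real.sqrt (2 * Real.pi) * σ := by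
      rw [show 2 * Real.pi * σ ^ 2 = (Real.sqrt (2 * Real.pi) * σ) ^ 2 by
        rw [mul_pow, Real.sq_sqrt (by positivity)], Real.sqrt_sq (by positivity)]
    rw [h1, h2, inv_mul_cancel₀ (by positivity)]
  have hgnn : ∀ y, 0 ≤ g y := fun y => by
    simp only [hg]
    split_ifs with h
    · exact le_refl 0
    · exact div_nonneg (sq_nonneg _) (hnn y)
  have mg : Measurable g := by
    have h1 : Measurable f := hd.continuous.measurable
    have h2 : Measurable (deriv f) := measurable_deriv f
    exact Measurable.ite (measurableSet_eq_fun h1 measurable_const)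
      measurable_const ((h2.pow_const 2).div h1)
  have key : ∀ u, (deriv f u) ^ 2 = g u * f u := by
    intro u
    simp only [hg]
    by_cases h : f u = 0
    · have hmin : IsLocalMin f u :=
        Filter.Eventually.of_forall fun x => by rw [h]; exact hnn x
      rw [if_pos h, hmin.deriv_eq_zero, h]; ring
    · rw [if_neg h, div_mul_cancel₀ _ h]
  -- a.e. integrability of slices
  have hF_ae : ∀ᵐ y : ℝ, Integrable (fun x => f (y - x) * φ x) := by
    filter_upwards [hφint.ae_convolution_exists L hint] with y hy
    exact hy.congr (Filter.Eventually.of_forall fun t => by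
      simp [hL, mul_comm])
  have hG_ae : ∀ᵐ y : ℝ, Integrable (fun x => g (y - x) * φ x) := by
    filter_upwards [hφint.ae_convolution_exists L hfisher] with y hy
    exact hy.congr (Filter.Eventually.of_forall fun t => by
      simp [hL, mul_comm])
  have hconv_eq : ∀ y, (φ ⋆[L] g) y = ∫ x, g (y - x) * φ x := by
    intro y
    rw [convolution_def]
    exact integral_congr_ae (Filter.Eventually.of_forall fun t => by
      simp [hL, mul_comm])
  have hconv_int : Integrable (φ ⋆[L] g) :=
    hφint.integrable_convolution L hfisher
  calc (∫ y, (if (∫ x, f (y - x) * φ x) = 0 then 0 else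
        (∫ x, deriv f (y - x) * φ x) ^ 2 / (∫ x, f (y - x) * φ x)))
      ≤ ∫ y, (φ ⋆[L] g) y := by
        apply integral_mono_of_nonneg
        · refine Filter.Eventually.of_forall fun y => ?_
          simp only [Pi.zero_apply]
          split_ifs with h
          · exact le_refl 0
          · refine div_nonneg (sq_nonneg _) ?_
            exact integral_nonneg fun x => mul_nonneg (hnn _) (hφnn x)
        · exact hconv_int
        · filter_upwards [hF_ae, hG_ae] with y hFy hGy
          rw [hconv_eq y]
          have hGnn : 0 ≤ ∫ x, g (y - x) * φ x :=
            integral_nonneg fun x => mul_nonneg (hgnn _) (hφnn x)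
          split_ifs with h
          · exact hGnn
          · have hFnn : 0 ≤ ∫ x, f (y - x) * φ x :=
              integral_nonneg fun x => mul_nonneg (hnn _) (hφnn x)
            have hFpos : 0 < ∫ x, f (y - x) * φ x := lt_of_le_of_ne hFnn (Ne.symm h)
            rw [div_le_iff₀ hFpos]
            -- Cauchy–Schwarz
            set a : ℝ → ℝ := fun x => Real.sqrt (g (y - x) * φ x) with ha
            set b : ℝ → ℝ := fun x => Real.sqrt (f (y - x) * φ x) with hb'
            have hann : ∀ x, 0 ≤ a x := fun x => Real.sqrt_nonneg _
            have hbnn : ∀ x, 0 ≤ b x := fun x => Real.sqrt_nonneg _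
            have hasq : ∀ x, a x ^ 2 = g (y - x) * φ x := fun x =>
              Real.sq_sqrt (mul_nonneg (hgnn _) (hφnn x))
            have hbsq : ∀ x, b x ^ 2 = f (y - x) * φ x := fun x =>
              Real.sq_sqrt (mul_nonneg (hnn _) (hφnn x))
            have hab : ∀ x, a x * b x = |deriv f (y - x)| * φ x := by
              intro x
              rw [ha, hb', ← Real.sqrt_mul (mul_nonneg (hgnn _) (hφnn x))]
              have : g (y - x) * φ x * (f (y - x) * φ x)
                  = (deriv f (y - x) * φ x) ^ 2 := by
                rw [mul_pow, key (y - x)]; ring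
              rw [this, Real.sqrt_sq_eq_abs, abs_mul, abs_of_nonneg (hφnn x)]
            have hma : AEStronglyMeasurable a volume := by
              refine (Measurable.aestronglyMeasurable ?_)
              exact ((mg.comp (measurable_const.sub measurable_id)).mul
                hφc.measurable).sqrt
            have hmb : AEStronglyMeasurable b volume := by
              refine (Measurable.aestronglyMeasurable ?_)
              exact ((hd.continuous.measurable.comp
                (measurable_const.sub measurable_id)).mul hφc.measurable).sqrt
            have h2a : Integrable (fun x => a x ^ 2) := by
              simp_rw [hasq]; exact hGy
            have h2b : Integrable (fun x => b x ^ 2) := by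
              simp_rw [hbsq]; exact hFy
            have hcs := cs_aux hann hbnn hma hmb h2a h2b
            simp_rw [hasq, hbsq] at hcs
            have hDle : |∫ x, deriv f (y - x) * φ x| ≤ ∫ x, a x * b x := by
              calc |∫ x, deriv f (y - x) * φ x|
                    = ‖∫ x, deriv f (y - x) * φ x‖ := (Real.norm_eq_abs _).symm
                _ ≤ ∫ x, ‖deriv f (y - x) * φ x‖ := norm_integral_le_integral_norm _
                _ = ∫ x, a x * b x := by
                    refine integral_congr_ae (Filter.Eventually.of_forall fun x => ?_)
                    dsimp only
                    rw [hab x, Real.norm_eq_abs, abs_mul, abs_of_nonneg (hφnn x)]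
            have habnn : 0 ≤ ∫ x, a x * b x :=
              integral_nonneg fun x => mul_nonneg (hann x) (hbnn x)
            calc (∫ x, deriv f (y - x) * φ x) ^ 2
                = |∫ x, deriv f (y - x) * φ x| ^ 2 := (sq_abs _).symm
              _ ≤ (∫ x, a x * b x) ^ 2 := pow_le_pow_left₀ (abs_nonneg _) hDle 2
              _ ≤ (∫ x, g (y - x) * φ x) * (∫ x, f (y - x) * φ x) := hcs
    _ = ∫ y, g y := by
        rw [integral_convolution L hφint hfisher]
        simp [hL, hφ1]
end

section
/- Let π ∈ (0,1), let I > 0, and let (S, Z₁, Z₀) be random variables with Z₁, Z₀ real-valued satisfying E[Z₁] = E[Z₀] = 0 and Var(Z₁) = Var(Z₀) = 1/I. Define Ž_a = E[Z_a | S] and Z̃_a = Z_a − Ž_a for a = 0, 1. Let q(S) be a random variable with 0 ≤ q(S) ≤ π(1−π) almost surely, and set V_Z² = Var(Z̃₁)/π + Var(Z̃₀)/(1−π), V_H² = E[(Ž₁ − Ž₀)²], V_A² = E[q(S)·(Ž₁/π + Ž₀/(1−π))²], and σ² = V_Z² + V_H² + V_A². Then (π(1−π)I)⁻¹ − σ²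 = E[(π(1−π) − q(S))·(Ž₁/π + Ž₀/(1−π))²] ≥ 0, with equality when q(S) = π(1−π) almost surely. -/
open MeasureTheory ProbabilityTheory

section Aux

variable {Ω : Type*} {m mΩ : MeasurableSpace Ω} {μ : Measure Ω}

/-- The conditional expectation of an `L²` function is in `L²`. -/
lemma memℒp_condexp_two [IsFiniteMeasure μ] (hm : m ≤ mΩ) {f : Ω → ℝ}
    (hf : MemLp f 2 μ) : MemLp (μ[f|m]) 2 μ := by
  set g : Lp ℝ 2 μ :=
    ((condExpL2 ℝ ℝ hm (hf.toLp f) : lpMeas ℝ ℝ m 2 μ) : Lp ℝ 2 μ) with hg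
  have hgm : AEStronglyMeasurable[m] (g : Ω → ℝ) μ :=
    lpMeas.aestronglyMeasurable _
  have hae : (g : Ω → ℝ) =ᵐ[μ] μ[f|m] := by
    refine ae_eq_condExp_of_forall_setIntegral_eq hm (hf.integrable one_le_two)
      (fun s _ _ => (Lp.memLp g).integrable one_le_two |>.integrableOn)
      (fun s hs hμs => ?_) hgm
    have h1 : ∫ x in s, (g : Ω → ℝ) x ∂μ = ∫ x in s, (hf.toLp f : Ω → ℝ) x ∂μ :=
      integral_condExpL2_eq hm (hf.toLp f) hs hμs.ne
    rw [h1]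
    exact setIntegral_congr_ae (hm s hs) (hf.coeFn_toLp.mono fun x hx _ => hx)
  exact (Lp.memLp g).ae_eq hae

/-- Product of two `L²` functions is integrable (via polarization). -/
lemma integrable_mul_of_memℒp_two {f g : Ω → ℝ} (hf : MemLp f 2 μ) (hg : MemLp g 2 μ) :
    Integrable (fun ω => f ω * g ω) μ := by
  have h : (fun ω => f ω * g ω)
      = fun ω => ((f ω + g ω) ^ 2 - f ω ^ 2 - g ω ^ 2) / 2 := by
    funext ω; ring
  rw [h]
  exact (((hf.add hg).integrable_sq.sub hf.integrable_sq).sub hg.integrable_sq).div_const 2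

/-- Orthogonality: `∫ f ⬝ E[f|m] = ∫ (E[f|m])²`. -/
lemma integral_mul_condexp_self [IsProbabilityMeasure μ] (hm : m ≤ mΩ) {f : Ω → ℝ}
    (hf : MemLp f 2 μ) :
    ∫ ω, f ω * (μ[f|m]) ω ∂μ = ∫ ω, ((μ[f|m]) ω) ^ 2 ∂μ := by
  have hY : MemLp (μ[f|m]) 2 μ := memℒp_condexp_two hm hf
  have hint : Integrable (fun ω => (μ[f|m]) ω * f ω) μ :=
    integrable_mul_of_memℒp_two hY hf
  have hpull : μ[(fun ω => (μ[f|m]) ω * f ω)|m]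
      =ᵐ[μ] fun ω => (μ[f|m]) ω * (μ[f|m]) ω := by
    have := condExp_mul_of_stronglyMeasurable_left (μ := μ) (f := μ[f|m]) (g := f)
      stronglyMeasurable_condExp hint (hf.integrable one_le_two)
    exact this
  have h1 : ∫ ω, (μ[f|m]) ω * f ω ∂μ = ∫ ω, (μ[(fun ω => (μ[f|m]) ω * f ω)|m]) ω ∂μ :=
    (integral_condExp hm).symm
  have h2 : ∫ ω, (μ[(fun ω => (μ[f|m]) ω * f ω)|m]) ω ∂μ
      = ∫ ω, (μ[f|m]) ω * (μ[f|m]) ω ∂μ := integral_congr_ae hpull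
  calc ∫ ω, f ω * (μ[f|m]) ω ∂μ = ∫ ω, (μ[f|m]) ω * f ω ∂μ := by
        simp_rw [mul_comm]
    _ = ∫ ω, (μ[f|m]) ω * (μ[f|m]) ω ∂μ := h1.trans h2
    _ = ∫ ω, ((μ[f|m]) ω) ^ 2 ∂μ := by simp_rw [sq]

/-- Law of total variance form: `Var(f - E[f|m]) = Var f - ∫ (E[f|m])²` for centered `f`. -/
lemma variance_sub_condexp [IsProbabilityMeasure μ] (hm : m ≤ mΩ) {f : Ω → ℝ}
    (hf : MemLp f 2 μ) (hmean : ∫ ω, f ω ∂μ = 0) :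
    variance (fun ω => f ω - (μ[f|m]) ω) μ
      = variance f μ - ∫ ω, ((μ[f|m]) ω) ^ 2 ∂μ := by
  have hY : MemLp (μ[f|m]) 2 μ := memℒp_condexp_two hm hf
  have hsub : MemLp (fun ω => f ω - (μ[f|m]) ω) 2 μ := hf.sub hY
  have hYint : ∫ ω, (μ[f|m]) ω ∂μ = 0 := by
    rw [integral_condExp hm]; exact hmean
  have hmean' : ∫ ω, (f ω - (μ[f|m]) ω) ∂μ = 0 := by
    rw [integral_sub (hf.integrable one_le_two) (hY.integrable one_le_two), hmean, hYint,
      sub_zero]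
  have hfY : Integrable (fun ω => f ω * (μ[f|m]) ω) μ := integrable_mul_of_memℒp_two hf hY
  have hexp : ∀ ω, (f ω - (μ[f|m]) ω) ^ 2
      = f ω ^ 2 - 2 * (f ω * (μ[f|m]) ω) + ((μ[f|m]) ω) ^ 2 := fun ω => by ring
  have hsq : ∫ ω, (f ω - (μ[f|m]) ω) ^ 2 ∂μ
      = ∫ ω, f ω ^ 2 ∂μ - 2 * ∫ ω, f ω * (μ[f|m]) ω ∂μ + ∫ ω, ((μ[f|m]) ω) ^ 2 ∂μ := by
    simp_rw [hexp]
    rw [integral_add (by exact (hf.integrable_sq.sub (hfY.const_mul 2))) hY.integrable_sq,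
      integral_sub hf.integrable_sq (hfY.const_mul 2), integral_const_mul]
  rw [variance_eq_sub hsub, variance_eq_sub hf, hmean, hmean']
  simp only [Pi.pow_apply]
  rw [hsq, integral_mul_condexp_self hm hf]
  ring

end Aux

/-- Conservativeness of the simple-randomization variance: with centered transformed
outcomes `Z₁, Z₀` of variance `1/I`, conditional means `Ž_a = E[Z_a | 𝒮]` (where `𝒮` is
the σ-algebra generated by the stratum variable) and a `𝒮`-measurable allocation term
`q` with `0 ≤ q ≤ π(1-π)` a.s., the difference `(π(1-π)I)⁻¹ - σ²_tdim` equals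
`E[(π(1-π) - q)(Ž₁/π + Ž₀/(1-π))²] ≥ 0`, with equality when `q = π(1-π)` a.s. -/
theorem stmt10 {Ω : Type*} {mΩ : MeasurableSpace Ω} (μ : Measure Ω) [IsProbabilityMeasure μ]
    (𝒮 : MeasurableSpace Ω) (h𝒮 : 𝒮 ≤ mΩ)
    (Z₁ Z₀ q : Ω → ℝ) (π I : ℝ)
    (hπ0 : 0 < π) (hπ1 : π < 1) (hI : 0 < I)
    (hmem1 : MemLp Z₁ 2 μ) (hmem0 : MemLp Z₀ 2 μ)
    (hm1 : ∫ ω, Z₁ ω ∂μ = 0) (hm0 : ∫ ω, Z₀ ω ∂μ = 0)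
    (hv1 : variance Z₁ μ = 1 / I) (hv0 : variance Z₀ μ = 1 / I)
    (hqmeas : Measurable[𝒮] q)
    (hq : ∀ᵐ ω ∂μ, 0 ≤ q ω ∧ q ω ≤ π * (1 - π)) :
    (π * (1 - π) * I)⁻¹
        - ((variance (fun ω => Z₁ ω - (μ[Z₁|𝒮]) ω) μ / π
              + variance (fun ω => Z₀ ω - (μ[Z₀|𝒮]) ω) μ / (1 - π))
            + (∫ ω, ((μ[Z₁|𝒮]) ω - (μ[Z₀|𝒮]) ω) ^ 2 ∂μ)
            + (∫ ω, q ω * ((μ[Z₁|𝒮]) ω / π + (μ[Z₀|𝒮]) ω / (1 - π)) ^ 2 ∂μ))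
      = ∫ ω, (π * (1 - π) - q ω) * ((μ[Z₁|𝒮]) ω / π + (μ[Z₀|𝒮]) ω / (1 - π)) ^ 2 ∂μ
    ∧ 0 ≤ ∫ ω, (π * (1 - π) - q ω) * ((μ[Z₁|𝒮]) ω / π + (μ[Z₀|𝒮]) ω / (1 - π)) ^ 2 ∂μ
    ∧ ((∀ᵐ ω ∂μ, q ω = π * (1 - π)) →
        (π * (1 - π) * I)⁻¹
          = (variance (fun ω => Z₁ ω - (μ[Z₁|𝒮]) ω) μ / π
              + variance (fun ω => Z₀ ω - (μ[Z₀|𝒮]) ω) μ / (1 - π))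
            + (∫ ω, ((μ[Z₁|𝒮]) ω - (μ[Z₀|𝒮]) ω) ^ 2 ∂μ)
            + (∫ ω, q ω * ((μ[Z₁|𝒮]) ω / π + (μ[Z₀|𝒮]) ω / (1 - π)) ^ 2 ∂μ)) := by
  have hπ' : (0:ℝ) < 1 - π := by linarith
  have hπne : π ≠ 0 := ne_of_gt hπ0
  have hπ'ne : (1:ℝ) - π ≠ 0 := ne_of_gt hπ'
  have hIne : I ≠ 0 := ne_of_gt hI
  set Y₁ : Ω → ℝ := μ[Z₁|𝒮] with hY₁def
  set Y₀ : Ω → ℝ := μ[Z₀|𝒮] with hY₀def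
  have hY₁ : MemLp Y₁ 2 μ := memℒp_condexp_two h𝒮 hmem1
  have hY₀ : MemLp Y₀ 2 μ := memℒp_condexp_two h𝒮 hmem0
  set W : Ω → ℝ := fun ω => Y₁ ω / π + Y₀ ω / (1 - π) with hWdef
  have hW : MemLp W 2 μ := by
    have h : (fun ω => π⁻¹ * Y₁ ω + (1 - π)⁻¹ * Y₀ ω) = W := by
      funext ω; simp [hWdef, div_eq_inv_mul]
    exact h ▸ ((hY₁.const_mul π⁻¹).add (hY₀.const_mul (1 - π)⁻¹))
  have hWsq : Integrable (fun ω => W ω ^ 2) μ := hW.integrable_sq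
  have hWmeas : AEStronglyMeasurable[mΩ] W μ := hW.aestronglyMeasurable
  have hqm : Measurable[mΩ] q := hqmeas.mono h𝒮 le_rfl
  -- integrability of q * W² and (π(1-π) - q) * W²
  have hasm : AEStronglyMeasurable[mΩ] (fun ω => q ω * W ω ^ 2) μ := by
    refine (hqm.aestronglyMeasurable.mul (hWmeas.mul hWmeas)).congr ?_
    filter_upwards with ω
    simp [sq, mul_assoc]
  have hqW : Integrable (fun ω => q ω * W ω ^ 2) μ := by
    refine Integrable.mono' (hWsq.const_mul (π * (1 - π))) hasm ?_
    · filter_upwards [hq] with ω hω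
      have h2 : (0:ℝ) ≤ W ω ^ 2 := sq_nonneg _
      rw [Real.norm_eq_abs, abs_mul, abs_of_nonneg hω.1, abs_of_nonneg h2]
      exact mul_le_mul_of_nonneg_right hω.2 h2
  -- law of total variance for each arm
  have hvar1 : variance (fun ω => Z₁ ω - Y₁ ω) μ = 1 / I - ∫ ω, (Y₁ ω) ^ 2 ∂μ := by
    rw [hY₁def, variance_sub_condexp h𝒮 hmem1 hm1, hv1]
  have hvar0 : variance (fun ω => Z₀ ω - Y₀ ω) μ = 1 / I - ∫ ω, (Y₀ ω) ^ 2 ∂μ := by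
    rw [hY₀def, variance_sub_condexp h𝒮 hmem0 hm0, hv0]
  -- algebraic identity integrated
  have halg : ∀ ω, Y₁ ω ^ 2 / π + Y₀ ω ^ 2 / (1 - π)
      = (Y₁ ω - Y₀ ω) ^ 2 + π * (1 - π) * W ω ^ 2 := by
    intro ω
    simp only [hWdef]
    field_simp
    ring
  have hHint : Integrable (fun ω => (Y₁ ω - Y₀ ω) ^ 2) μ := (hY₁.sub hY₀).integrable_sq
  have hsplit : (∫ ω, (Y₁ ω) ^ 2 ∂μ) / π + (∫ ω, (Y₀ ω) ^ 2 ∂μ) / (1 - π)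
      = (∫ ω, (Y₁ ω - Y₀ ω) ^ 2 ∂μ) + π * (1 - π) * ∫ ω, W ω ^ 2 ∂μ := by
    have h1 : (∫ ω, (Y₁ ω) ^ 2 ∂μ) / π + (∫ ω, (Y₀ ω) ^ 2 ∂μ) / (1 - π)
        = ∫ ω, (Y₁ ω ^ 2 / π + Y₀ ω ^ 2 / (1 - π)) ∂μ := by
      rw [integral_add (hY₁.integrable_sq.div_const _) (hY₀.integrable_sq.div_const _),
        integral_div, integral_div]
    rw [h1, integral_congr_ae (Filter.Eventually.of_forall halg),
      integral_add hHint (hWsq.const_mul _), integral_const_mul]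
  -- main difference identity
  have hinv : (π * (1 - π) * I)⁻¹ = (1 / I) / π + (1 / I) / (1 - π) := by
    field_simp
    ring
  have hqWsub : ∫ ω, (π * (1 - π) - q ω) * W ω ^ 2 ∂μ
      = π * (1 - π) * (∫ ω, W ω ^ 2 ∂μ) - ∫ ω, q ω * W ω ^ 2 ∂μ := by
    have : (fun ω => (π * (1 - π) - q ω) * W ω ^ 2)
        = fun ω => π * (1 - π) * W ω ^ 2 - q ω * W ω ^ 2 := by funext ω; ring
    rw [this, integral_sub (hWsq.const_mul _) hqW, integral_const_mul]
  have hmain : (π * (1 - π) * I)⁻¹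
        - ((variance (fun ω => Z₁ ω - Y₁ ω) μ / π
              + variance (fun ω => Z₀ ω - Y₀ ω) μ / (1 - π))
            + (∫ ω, (Y₁ ω - Y₀ ω) ^ 2 ∂μ)
            + (∫ ω, q ω * W ω ^ 2 ∂μ))
      = ∫ ω, (π * (1 - π) - q ω) * W ω ^ 2 ∂μ := by
    rw [hvar1, hvar0, hinv, hqWsub, sub_div, sub_div]
    have := hsplit
    linarith
  have hnonneg : 0 ≤ ∫ ω, (π * (1 - π) - q ω) * W ω ^ 2 ∂μ := by
    refine integral_nonneg_of_ae ?_
    filter_upwards [hq] with ω hω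
    exact mul_nonneg (by linarith [hω.2]) (sq_nonneg _)
  refine ⟨hmain, hnonneg, fun heq => ?_⟩
  have hzero : ∫ ω, (π * (1 - π) - q ω) * W ω ^ 2 ∂μ = 0 := by
    rw [integral_congr_ae (g := fun _ => (0:ℝ)) ?_, integral_zero]
    filter_upwards [heq] with ω hω
    rw [hω]; ring
  have := hmain
  rw [hzero] at this
  linarith
end
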